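/- Let n ≥ 1 and let x > 1 be real. Then Φ_n^*(x) = ∏_{j=1}^n (x^{(j,n)_*} − 1)^{cos(2πj/n)}, where the exponents are the real powers (rpow) of the positive reals x^{(j,n)_*} − 1. -/

import Mathlib

/-!
Taking logarithms, the right-hand side becomes `∑ⱼ cos(2πj/n) log(x^{dⱼ} - 1)` with
`dⱼ = (j,n)_*`. Since `x^d - 1 = ∏ (x - ζ)` over the `d`-th roots of unity, which are the `ζ_n^m`
with `n/d ∣ m`, exchanging the sums gives `∑ₘ log|x - ζ_n^m| · ∑_{j : n/dⱼ ∣ m} cos(2πj/n)`.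
The condition `n/(j,n)_* ∣ m` is symmetric in `j` and `m`, because a unitary divisor of `n` that
divides `j` divides `(j,n)_*`. So the inner sum is the real part of the sum of all
`(m,n)_*`-th roots of unity: it is `1` if `(m,n)_* = 1` and `0` otherwise. What remains is
`log |Φ_n^*(x)|`, and `Φ_n^*(x) > 0` because its factors for `j` and `n - j` are conjugate,
so their arguments cancel.
-/

open Complex Polynomial Finset ComplexConjugate

/-- The unitary gcd `(j,n)_*`: the largest `d` with `d ∣ j`, `d ∣ n` and `gcd(d, n/d) = 1`. -/
def ugcd (j n : ℕ) : ℕ :=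
  Nat.findGreatest (fun d => d ∣ j ∧ d ∣ n ∧ Nat.gcd d (n / d) = 1) n

/-- The unitary cyclotomic polynomial `Φ_n^*(X) = ∏_{1 ≤ j ≤ n, (j,n)_* = 1} (X − ζ_n^j)`. -/
noncomputable def unitaryCyc (n : ℕ) : Polynomial ℂ :=
  ∏ j ∈ (Finset.Icc 1 n).filter (fun j => ugcd j n = 1),
    (X - C (Complex.exp (2 * Real.pi * Complex.I / n) ^ j))

namespace Finset

@[to_additive sum_Icc_one_eq_sum_range]
lemma prod_Icc_one_eq_prod_range {M : Type*} [CommMonoid M] {f : ℕ → M} {n : ℕ}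
    (h : f n = f 0) : ∏ j ∈ Icc 1 n, f j = ∏ j ∈ range n, f j := by
  obtain _ | n := n
  · simp
  rw [← insert_Icc_right_eq_Icc_add_one (by omega), Nat.range_succ_eq_Icc_zero,
    ← insert_Icc_add_one_left_eq_Icc (Nat.zero_le n), prod_insert (by simp),
    prod_insert (by simp), h, zero_add]

lemma sum_range_succ_eq_zero_of_antisymm {f : ℕ → ℝ} {n : ℕ} (h : ∀ j ≤ n, f (n - j) = -f j) :
    ∑ j ∈ range (n + 1), f j = 0 := by
  have hreflect := sum_range_reflect f (n + 1)
  rw [sum_congr rfl fun j hj => by rw [Nat.add_sub_cancel, h j (by simp at hj; omega)],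
    sum_neg_distrib] at hreflect
  linarith

end Finset

lemma Nat.Icc_filter_dvd_eq_map {e g : ℕ} (he : 0 < e) :
    {j ∈ Icc 1 (e * g) | e ∣ j} = (Icc 1 g).map ⟨(e * ·), mul_right_injective₀ he.ne'⟩ := by
  ext j
  simp only [mem_filter, mem_Icc, mem_map, Function.Embedding.coeFn_mk]
  constructor
  · rintro ⟨⟨hj1, hjn⟩, k, rfl⟩
    exact ⟨k, ⟨Nat.pos_of_mul_pos_left hj1, Nat.le_of_mul_le_mul_left hjn he⟩, rfl⟩
  · rintro ⟨k, ⟨hk1, hkg⟩, rfl⟩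
    exact ⟨⟨Nat.mul_pos he hk1, Nat.mul_le_mul_left e hkg⟩, dvd_mul_right e k⟩

def IsUnitaryDivisor (d n : ℕ) : Prop := d ∣ n ∧ Nat.Coprime d (n / d)

namespace IsUnitaryDivisor

variable {d e n : ℕ}

lemma div (h : IsUnitaryDivisor d n) (hn : 0 < n) : IsUnitaryDivisor (n / d) n := by
  refine ⟨Nat.div_dvd_of_dvd h.1, ?_⟩
  rw [Nat.div_div_self h.1 hn.ne']
  exact h.2.symm

lemma lcm (hd : IsUnitaryDivisor d n) (he : IsUnitaryDivisor e n) :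
    IsUnitaryDivisor (Nat.lcm d e) n := by
  have hdvd : Nat.lcm d e ∣ n := Nat.lcm_dvd hd.1 he.1
  refine ⟨hdvd, Nat.Coprime.coprime_dvd_left (Nat.lcm_dvd_mul d e) (Nat.Coprime.mul_left ?_ ?_)⟩
  · exact hd.2.coprime_dvd_right (Nat.div_dvd_div_left hdvd (Nat.dvd_lcm_left d e))
  · exact he.2.coprime_dvd_right (Nat.div_dvd_div_left hdvd (Nat.dvd_lcm_right d e))

end IsUnitaryDivisor

section ugcd

variable {j m n e : ℕ}

lemma ugcd_spec (hn : 0 < n) : ugcd j n ∣ j ∧ IsUnitaryDivisor (ugcd j n) n :=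
  Nat.findGreatest_spec (P := fun d => d ∣ j ∧ d ∣ n ∧ Nat.gcd d (n / d) = 1) hn
    ⟨one_dvd j, one_dvd n, Nat.gcd_one_left _⟩

lemma le_ugcd (hn : 0 < n) (hej : e ∣ j) (he : IsUnitaryDivisor e n) : e ≤ ugcd j n :=
  Nat.le_findGreatest (Nat.le_of_dvd hn he.1) ⟨hej, he⟩

lemma ugcd_pos (hn : 0 < n) : 0 < ugcd j n :=
  le_ugcd hn (one_dvd j) ⟨one_dvd n, Nat.coprime_one_left _⟩

lemma IsUnitaryDivisor.dvd_ugcd (hn : 0 < n) (he : IsUnitaryDivisor e n) (hej : e ∣ j) :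
    e ∣ ugcd j n := by
  obtain ⟨hdj, hd⟩ := ugcd_spec (j := j) hn
  have hlcm : Nat.lcm e (ugcd j n) = ugcd j n :=
    le_antisymm (le_ugcd hn (Nat.lcm_dvd hej hdj) (he.lcm hd))
      (Nat.le_of_dvd (Nat.lcm_pos (Nat.pos_of_dvd_of_pos he.1 hn) (ugcd_pos hn))
        (Nat.dvd_lcm_right _ _))
  exact hlcm ▸ Nat.dvd_lcm_left _ _

lemma ugcd_self_sub (hn : 0 < n) (hj : j ≤ n) : ugcd (n - j) n = ugcd j n := by
  have key : ∀ a b, a + b = n → ugcd a n ∣ ugcd b n := fun a b hab => by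
    obtain ⟨hda, hd⟩ := ugcd_spec (j := a) hn
    exact hd.dvd_ugcd hn ((Nat.dvd_add_right hda).mp (hab ▸ hd.1))
  exact Nat.dvd_antisymm (key _ _ (by omega)) (key _ _ (by omega))

lemma div_ugcd_dvd_comm (hn : 0 < n) : n / ugcd j n ∣ m ↔ n / ugcd m n ∣ j := by
  have key : ∀ a b, n / ugcd a n ∣ b → n / ugcd b n ∣ a := fun a b hab => by
    obtain ⟨hda, hd⟩ := ugcd_spec (j := a) hn
    have := Nat.div_dvd_div_left (ugcd_spec hn).2.1 ((hd.div hn).dvd_ugcd hn hab)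
    rw [Nat.div_div_self hd.1 hn.ne'] at this
    exact this.trans hda
  exact ⟨key j m, key m j⟩

end ugcd

namespace IsPrimitiveRoot

variable {R : Type*} [CommRing R] [IsDomain R] {ζ : R} {n e g : ℕ}

lemma sum_Icc_pow (hζ : IsPrimitiveRoot ζ n) :
    ∑ k ∈ Icc 1 n, ζ ^ k = if n = 1 then 1 else 0 := by
  rw [sum_Icc_one_eq_sum_range (by rw [hζ.pow_eq_one, pow_zero])]
  rcases lt_trichotomy n 1 with hn | rfl | hn
  · simp [show n = 0 by omega]
  · simp
  · rw [hζ.geom_sum_eq_zero hn, if_neg hn.ne']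

lemma sum_filter_dvd_pow (hζ : IsPrimitiveRoot ζ n) (hn : 0 < n) (h : e * g = n) :
    ∑ j ∈ Icc 1 n with e ∣ j, ζ ^ j = if g = 1 then 1 else 0 := by
  subst h
  rw [Nat.Icc_filter_dvd_eq_map (Nat.pos_of_mul_pos_right hn), sum_map]
  simp only [Function.Embedding.coeFn_mk, pow_mul]
  exact (hζ.pow hn rfl).sum_Icc_pow

lemma X_pow_sub_one_eq_prod_filter_dvd (hζ : IsPrimitiveRoot ζ n) (hn : 0 < n)
    (h : e * g = n) :
    X ^ g - 1 = ∏ j ∈ Icc 1 n with e ∣ j, (X - C (ζ ^ j)) := by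
  subst h
  have hω := hζ.pow hn rfl
  rw [Nat.Icc_filter_dvd_eq_map (Nat.pos_of_mul_pos_right hn), prod_map,
    ← C_1, X_pow_sub_C_eq_prod hω (Nat.pos_of_mul_pos_left hn) (one_pow g),
    ← prod_Icc_one_eq_prod_range (by rw [hω.pow_eq_one, pow_zero])]
  simp only [Function.Embedding.coeFn_mk, pow_mul, mul_one]

end IsPrimitiveRoot

namespace Complex

lemma prod_eq_ofReal_prod_norm_of_sum_arg_eq_zero {ι : Type*} {s : Finset ι} {f : ι → ℂ}
    (h : ∑ i ∈ s, arg (f i) = 0) : ∏ i ∈ s, f i = ((∏ i ∈ s, ‖f i‖ : ℝ) : ℂ) :=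
  calc ∏ i ∈ s, f i = ∏ i ∈ s, (‖f i‖ * exp (arg (f i) * I)) := by
        simp only [norm_mul_exp_arg_mul_I]
    _ = (∏ i ∈ s, ‖f i‖ : ℝ) * exp ((∑ i ∈ s, arg (f i) : ℝ) * I) := by
        push_cast
        rw [prod_mul_distrib, sum_mul, exp_sum]
    _ = _ := by simp [h]

lemma re_ofReal_sub_pos {x : ℝ} {z : ℂ} (hx : 1 < x) (hz : ‖z‖ ≤ 1) : 0 < ((x : ℂ) - z).re := by
  have := (re_le_norm z).trans hz
  rw [sub_re, ofReal_re]
  linarith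

end Complex

namespace IsPrimitiveRoot

variable {ζ : ℂ} {n e g : ℕ} {x : ℝ}

lemma norm_pow_eq_one (hζ : IsPrimitiveRoot ζ n) (hn : 0 < n) (m : ℕ) : ‖ζ ^ m‖ = 1 := by
  rw [norm_pow, hζ.norm'_eq_one hn.ne', one_pow]

lemma conj_pow (hζ : IsPrimitiveRoot ζ n) (hn : 0 < n) {j : ℕ} (hj : j ≤ n) :
    conj (ζ ^ j) = ζ ^ (n - j) := by
  rw [← Complex.inv_eq_conj (hζ.norm_pow_eq_one hn j), pow_sub₀ _ (hζ.ne_zero hn.ne') hj,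
    hζ.pow_eq_one, one_mul]

lemma re_ofReal_sub_pow_pos (hζ : IsPrimitiveRoot ζ n) (hn : 0 < n) (hx : 1 < x) (m : ℕ) :
    0 < ((x : ℂ) - ζ ^ m).re :=
  Complex.re_ofReal_sub_pos hx (hζ.norm_pow_eq_one hn m).le

lemma ofReal_sub_pow_ne_zero (hζ : IsPrimitiveRoot ζ n) (hn : 0 < n) (hx : 1 < x) (m : ℕ) :
    (x : ℂ) - ζ ^ m ≠ 0 := fun h => by
  simpa [h] using hζ.re_ofReal_sub_pow_pos hn hx m

lemma arg_ofReal_sub_pow_sub (hζ : IsPrimitiveRoot ζ n) (hn : 0 < n) (hx : 1 < x) {j : ℕ}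
    (hj : j ≤ n) : Complex.arg ((x : ℂ) - ζ ^ (n - j)) = -Complex.arg ((x : ℂ) - ζ ^ j) := by
  have hpi : Complex.arg ((x : ℂ) - ζ ^ j) ≠ Real.pi := fun h =>
    (Complex.arg_eq_pi_iff.1 h).1.not_gt (hζ.re_ofReal_sub_pow_pos hn hx j)
  have hconj : (x : ℂ) - ζ ^ (n - j) = conj ((x : ℂ) - ζ ^ j) := by
    rw [map_sub, Complex.conj_ofReal, hζ.conj_pow hn hj]
  rw [hconj, Complex.arg_conj, if_neg hpi]

lemma log_pow_sub_one (hζ : IsPrimitiveRoot ζ n) (hn : 0 < n) (hx : 1 < x) (h : e * g = n) :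
    Real.log (x ^ g - 1) = ∑ j ∈ Icc 1 n with e ∣ j, Real.log ‖(x : ℂ) - ζ ^ j‖ := by
  have hprod := congrArg (eval (x : ℂ)) (hζ.X_pow_sub_one_eq_prod_filter_dvd hn h)
  simp only [eval_sub, eval_pow, eval_X, eval_one, eval_prod, eval_C] at hprod
  have hpos : 0 ≤ x ^ g - 1 := sub_nonneg.2 (one_le_pow₀ hx.le)
  rw [← Real.log_prod fun j _ => norm_ne_zero_iff.2 (hζ.ofReal_sub_pow_ne_zero hn hx j),
    ← norm_prod, ← hprod, ← ofReal_pow, ← ofReal_one, ← ofReal_sub, Complex.norm_of_nonneg hpos]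

lemma sum_re_pow_mul_log_pow_ugcd_sub_one (hζ : IsPrimitiveRoot ζ n) (hn : 0 < n) (hx : 1 < x) :
    ∑ j ∈ Icc 1 n, (ζ ^ j).re * Real.log (x ^ ugcd j n - 1) =
      ∑ m ∈ Icc 1 n with ugcd m n = 1, Real.log ‖(x : ℂ) - ζ ^ m‖ := by
  set L : ℕ → ℝ := fun m => Real.log ‖(x : ℂ) - ζ ^ m‖
  have hdiv (m : ℕ) : n / ugcd m n * ugcd m n = n := Nat.div_mul_cancel (ugcd_spec hn).2.1
  calc ∑ j ∈ Icc 1 n, (ζ ^ j).re * Real.log (x ^ ugcd j n - 1)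
      = ∑ j ∈ Icc 1 n, ∑ m ∈ Icc 1 n, if n / ugcd j n ∣ m then (ζ ^ j).re * L m else 0 := by
        refine sum_congr rfl fun j _ => ?_
        rw [hζ.log_pow_sub_one hn hx (hdiv j), sum_filter, mul_sum]
        simp only [mul_ite, mul_zero, L]
    _ = ∑ m ∈ Icc 1 n, L m * (∑ j ∈ Icc 1 n with n / ugcd m n ∣ j, ζ ^ j).re := by
        rw [sum_comm]
        refine sum_congr rfl fun m _ => ?_
        rw [re_sum, sum_filter, mul_sum]
        refine sum_congr rfl fun j _ => ?_
        simp only [div_ugcd_dvd_comm (j := j) (m := m) hn]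
        split_ifs <;> simp [mul_comm]
    _ = ∑ m ∈ Icc 1 n with ugcd m n = 1, L m := by
        rw [sum_filter]
        refine sum_congr rfl fun m _ => ?_
        rw [hζ.sum_filter_dvd_pow hn (hdiv m)]
        split_ifs <;> simp

lemma sum_arg_ofReal_sub_pow_eq_zero (hζ : IsPrimitiveRoot ζ n) (hn : 0 < n) (hx : 1 < x) :
    ∑ m ∈ Icc 1 n with ugcd m n = 1, Complex.arg ((x : ℂ) - ζ ^ m) = 0 := by
  set f : ℕ → ℝ := fun m => if ugcd m n = 1 then Complex.arg ((x : ℂ) - ζ ^ m) else 0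
  have hf0 : f 0 = 0 := by
    have : (x : ℂ) - ζ ^ 0 = ((x - 1 : ℝ) : ℂ) := by push_cast; ring
    simp only [f, this, arg_ofReal_of_nonneg (sub_nonneg.2 hx.le), ite_self]
  have hanti (j : ℕ) (hj : j ≤ n) : f (n - j) = -f j := by
    simp only [f, ugcd_self_sub hn hj]
    split_ifs
    · exact hζ.arg_ofReal_sub_pow_sub hn hx hj
    · rw [neg_zero]
  have hsum := sum_range_succ_eq_zero_of_antisymm hanti
  rw [Nat.range_succ_eq_Icc_zero, ← insert_Icc_add_one_left_eq_Icc (Nat.zero_le n),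
    sum_insert (by simp), hf0, zero_add, zero_add] at hsum
  rw [sum_filter, hsum]

lemma eval_prod_X_sub_C_pow (hζ : IsPrimitiveRoot ζ n) (hn : 0 < n) (hx : 1 < x) :
    (∏ m ∈ Icc 1 n with ugcd m n = 1, (X - C (ζ ^ m))).eval (x : ℂ) =
      (Real.exp (∑ m ∈ Icc 1 n with ugcd m n = 1, Real.log ‖(x : ℂ) - ζ ^ m‖) : ℂ) := by
  simp only [eval_prod, eval_sub, eval_X, eval_C]
  rw [Complex.prod_eq_ofReal_prod_norm_of_sum_arg_eq_zero
    (hζ.sum_arg_ofReal_sub_pow_eq_zero hn hx), Real.exp_sum]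
  exact congrArg _ (prod_congr rfl fun m _ =>
    (Real.exp_log (norm_pos_iff.2 (hζ.ofReal_sub_pow_ne_zero hn hx m))).symm)

end IsPrimitiveRoot

theorem stmt11 (n : ℕ) (hn : 1 ≤ n) (x : ℝ) (hx : 1 < x) :
    (unitaryCyc n).eval (x : ℂ) =
      ((∏ j ∈ Finset.Icc 1 n,
          (x ^ (ugcd j n) - 1) ^ Real.cos (2 * Real.pi * j / n) : ℝ) : ℂ) := by
  have hζ := Complex.isPrimitiveRoot_exp n (by omega)
  have hcos (j : ℕ) : Real.cos (2 * Real.pi * j / n) = (exp (2 * Real.pi * I / n) ^ j).re := by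
    rw [← exp_nat_mul, show (j : ℂ) * (2 * Real.pi * I / n) = (2 * Real.pi * j / n : ℝ) * I by
      push_cast; ring, exp_ofReal_mul_I_re]
  rw [unitaryCyc, hζ.eval_prod_X_sub_C_pow hn hx, ← hζ.sum_re_pow_mul_log_pow_ugcd_sub_one hn hx,
    Real.exp_sum]
  refine congrArg _ (prod_congr rfl fun j _ => ?_)
  rw [Real.rpow_def_of_pos (sub_pos.2 (one_lt_pow₀ hx (ugcd_pos hn).ne')), hcos, mul_comm]
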